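/- Suppose max_{x} ∑_{a} |π(a|x) − μ(a|x)| ≤ ε with λ ∈ [0,1], γ ∈ (0,1) and γ(1−λ+λε)/(1−λγ) < 1. Then Q^π is the unique fixed point of the operator R^π_λ: if R^π_λ Q = Q then Q = Q^π. -/

import Mathlib

open scoped BigOperators

noncomputable section

/-- The operator `P^π` on Q-functions. -/
def Pop {X A : Type*} [Fintype X] [Fintype A] (P : X → A → X → ℝ) (π : X → A → ℝ)
    (Q : X × A → ℝ) : X × A → ℝ :=
  fun p => ∑ y : X, ∑ b : A, P p.1 p.2 y * π y b * Q (y, b)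

/-- The Bellman operator `T^π Q = r + γ P^π Q`. -/
def Tpol {X A : Type*} [Fintype X] [Fintype A] (P : X → A → X → ℝ) (π : X → A → ℝ)
    (γ : ℝ) (r : X × A → ℝ) (Q : X × A → ℝ) : X × A → ℝ :=
  r + γ • Pop P π Q

/-- The off-policy corrected λ-operator
`R^π_λ Q = Q + ∑_{t≥0} (λγ)^t (P^μ)^t (T^π Q − Q)`. -/
def Rpi {X A : Type*} [Fintype X] [Fintype A] (P : X → A → X → ℝ) (π μ : X → A → ℝ)
    (γ lam : ℝ) (r : X × A → ℝ) (Q : X × A → ℝ) : X × A → ℝ :=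
  Q + ∑' t : ℕ, (lam * γ) ^ t • (Pop P μ)^[t] (Tpol P π γ r Q - Q)

/-!
A fixed point `Q` of `R^π_λ` makes the series `S = ∑ₜ (λγ)ᵗ (P^μ)ᵗ (T^π Q − Q)` vanish. Since
`P^μ` is linear and non-expansive in the sup norm and `|λγ| < 1`, the series converges and satisfies
`S = (T^π Q − Q) + λγ P^μ S`, so `T^π Q = Q`. Finally `T^π` is a `γ`-contraction, so its fixed
point is unique and `Q = Q^π`.
-/

section GeometricSeries

variable {E : Type*} [NormedAddCommGroup E] [NormedSpace ℝ E]

theorem summable_pow_smul_iterate [CompleteSpace E] {f : E → E} (hf : ∀ x, ‖f x‖ ≤ ‖x‖)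
    {a : ℝ} (ha : |a| < 1) (x : E) : Summable fun t : ℕ => a ^ t • f^[t] x := by
  have hiter : ∀ t : ℕ, ‖f^[t] x‖ ≤ ‖x‖ := by
    intro t
    induction t with
    | zero => rfl
    | succ t ih => exact (Function.iterate_succ_apply' f t x ▸ hf _).trans ih
  refine .of_norm_bounded ((summable_geometric_of_lt_one (abs_nonneg a) ha).mul_right ‖x‖)
    fun t => ?_
  rw [norm_smul, Real.norm_eq_abs, abs_pow]
  exact mul_le_mul_of_nonneg_left (hiter t) (pow_nonneg (abs_nonneg a) t)

theorem tsum_pow_smul_iterate_eq_add (f : E →L[ℝ] E) (a : ℝ) (x : E)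
    (hs : Summable fun t : ℕ => a ^ t • f^[t] x) :
    ∑' t : ℕ, a ^ t • f^[t] x = x + a • f (∑' t : ℕ, a ^ t • f^[t] x) := by
  have hshift : ∀ t : ℕ, a ^ (t + 1) • f^[t + 1] x = a • f (a ^ t • f^[t] x) := by
    intro t
    rw [Function.iterate_succ_apply', map_smul, smul_smul, pow_succ']
  calc ∑' t : ℕ, a ^ t • f^[t] x = a ^ 0 • f^[0] x + ∑' t : ℕ, a ^ (t + 1) • f^[t + 1] x :=
        hs.tsum_eq_zero_add
    _ = x + a • f (∑' t : ℕ, a ^ t • f^[t] x) := by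
        rw [tsum_congr hshift, tsum_const_smul'', ← f.map_tsum hs, pow_zero, one_smul,
          Function.iterate_zero_apply]

theorem eq_zero_of_tsum_pow_smul_iterate_eq_zero (f : E →L[ℝ] E) {a : ℝ} {x : E}
    (hs : Summable fun t : ℕ => a ^ t • f^[t] x) (h : ∑' t : ℕ, a ^ t • f^[t] x = 0) :
    x = 0 := by
  simpa [h] using (tsum_pow_smul_iterate_eq_add f a x hs).symm

theorem eq_zero_of_eq_smul_apply {f : E → E} (hf : ∀ x, ‖f x‖ ≤ ‖x‖) {γ : ℝ} (hγ : |γ| < 1)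
    {x : E} (hx : x = γ • f x) : x = 0 := by
  have hle : ‖x‖ ≤ |γ| * ‖x‖ := by
    calc ‖x‖ = |γ| * ‖f x‖ := by rw [← Real.norm_eq_abs, ← norm_smul, ← hx]
      _ ≤ |γ| * ‖x‖ := mul_le_mul_of_nonneg_left (hf x) (abs_nonneg γ)
  exact norm_eq_zero.mp (by nlinarith [norm_nonneg x])

end GeometricSeries

section MDP

variable {X A : Type*} [Fintype X] [Fintype A]

def popLinearMap (P : X → A → X → ℝ) (σ : X → A → ℝ) :
    (X × A → ℝ) →ₗ[ℝ] (X × A → ℝ) where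
  toFun := Pop P σ
  map_add' Q R := by
    funext p
    simp only [Pop, Pi.add_apply, mul_add, Finset.sum_add_distrib]
  map_smul' c Q := by
    funext p
    simp only [Pop, Pi.smul_apply, smul_eq_mul, RingHom.id_apply, Finset.mul_sum]
    exact Finset.sum_congr rfl fun y _ => Finset.sum_congr rfl fun b _ => by ring

def popCLM (P : X → A → X → ℝ) (σ : X → A → ℝ) : (X × A → ℝ) →L[ℝ] (X × A → ℝ) :=
  LinearMap.toContinuousLinearMap (popLinearMap P σ)

theorem coe_popCLM (P : X → A → X → ℝ) (σ : X → A → ℝ) : ⇑(popCLM P σ) = Pop P σ := rfl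

theorem norm_Pop_le {P : X → A → X → ℝ} (hP0 : ∀ x a y, 0 ≤ P x a y)
    (hP1 : ∀ x a, ∑ y : X, P x a y = 1) {σ : X → A → ℝ} (hσ0 : ∀ x a, 0 ≤ σ x a)
    (hσ1 : ∀ x, ∑ a : A, σ x a = 1) (Q : X × A → ℝ) : ‖Pop P σ Q‖ ≤ ‖Q‖ := by
  refine (pi_norm_le_iff_of_nonneg (norm_nonneg Q)).mpr fun p => ?_
  have hweight : ∀ y b, 0 ≤ P p.1 p.2 y * σ y b := fun y b => mul_nonneg (hP0 _ _ _) (hσ0 _ _)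
  calc ‖Pop P σ Q p‖ ≤ ∑ y : X, ∑ b : A, ‖P p.1 p.2 y * σ y b * Q (y, b)‖ :=
        (norm_sum_le _ _).trans (Finset.sum_le_sum fun y _ => norm_sum_le _ _)
    _ ≤ ∑ y : X, ∑ b : A, P p.1 p.2 y * σ y b * ‖Q‖ := by
        gcongr with y _ b _
        rw [norm_mul, Real.norm_of_nonneg (hweight y b)]
        exact mul_le_mul_of_nonneg_left (norm_le_pi_norm Q (y, b)) (hweight y b)
    _ = ‖Q‖ := by
        simp only [← Finset.sum_mul, ← Finset.mul_sum, hσ1, mul_one, hP1, one_mul]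

theorem eq_of_isFixedPt_Tpol {P : X → A → X → ℝ} (hP0 : ∀ x a y, 0 ≤ P x a y)
    (hP1 : ∀ x a, ∑ y : X, P x a y = 1) {π : X → A → ℝ} (hπ0 : ∀ x a, 0 ≤ π x a)
    (hπ1 : ∀ x, ∑ a : A, π x a = 1) {γ : ℝ} (hγ : |γ| < 1) {r Q Q' : X × A → ℝ}
    (hQ : Function.IsFixedPt (Tpol P π γ r) Q) (hQ' : Function.IsFixedPt (Tpol P π γ r) Q') :
    Q = Q' := by
  refine sub_eq_zero.mp (eq_zero_of_eq_smul_apply (norm_Pop_le hP0 hP1 hπ0 hπ1) hγ ?_)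
  rw [← coe_popCLM, map_sub, smul_sub]
  conv_lhs => rw [← hQ, ← hQ']
  simp only [Tpol, coe_popCLM, add_sub_add_left_eq_sub]

theorem isFixedPt_Tpol_of_isFixedPt_Rpi {P : X → A → X → ℝ} (hP0 : ∀ x a y, 0 ≤ P x a y)
    (hP1 : ∀ x a, ∑ y : X, P x a y = 1) {π μ : X → A → ℝ} (hμ0 : ∀ x a, 0 ≤ μ x a)
    (hμ1 : ∀ x, ∑ a : A, μ x a = 1) {γ lam : ℝ} (hlγ : |lam * γ| < 1) {r Q : X × A → ℝ}
    (hQ : Function.IsFixedPt (Rpi P π μ γ lam r) Q) : Function.IsFixedPt (Tpol P π γ r) Q := by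
  have hs := summable_pow_smul_iterate (norm_Pop_le hP0 hP1 hμ0 hμ1) hlγ (Tpol P π γ r Q - Q)
  rw [← coe_popCLM] at hs
  refine sub_eq_zero.mp (eq_zero_of_tsum_pow_smul_iterate_eq_zero _ hs ?_)
  exact add_eq_left.mp hQ

end MDP

theorem stmt9_general {X A : Type*} [Fintype X] [Fintype A]
    (P : X → A → X → ℝ)
    (hP0 : ∀ x a y, 0 ≤ P x a y) (hP1 : ∀ x a, ∑ y : X, P x a y = 1)
    (π μ : X → A → ℝ)
    (hπ0 : ∀ x a, 0 ≤ π x a) (hπ1 : ∀ x, ∑ a : A, π x a = 1)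
    (hμ0 : ∀ x a, 0 ≤ μ x a) (hμ1 : ∀ x, ∑ a : A, μ x a = 1)
    (γ : ℝ) (hγ0 : 0 < γ) (hγ1 : γ < 1)
    (lam : ℝ) (hl0 : 0 ≤ lam) (hl1 : lam ≤ 1)
    (r : X × A → ℝ) (Qπ : X × A → ℝ)
    (hQπ : Qπ = r + γ • Pop P π Qπ) :
    ∀ Q : X × A → ℝ, Rpi P π μ γ lam r Q = Q → Q = Qπ := by
  intro Q hQ
  have hγ : |γ| < 1 := by rw [abs_of_pos hγ0]; exact hγ1
  have hlγ : |lam * γ| < 1 := by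
    rw [abs_of_nonneg (mul_nonneg hl0 hγ0.le)]
    nlinarith
  exact eq_of_isFixedPt_Tpol hP0 hP1 hπ0 hπ1 hγ
    (isFixedPt_Tpol_of_isFixedPt_Rpi hP0 hP1 hμ0 hμ1 hlγ hQ) hQπ.symm

/-- uniqueness of the fixed point of `R^π_λ` when the contraction
coefficient `γ(1−λ+λε)/(1−λγ)` is below 1: any fixed point of `R^π_λ` equals `Q^π`. -/
theorem stmt9 {X A : Type*} [Fintype X] [Fintype A] [Nonempty X] [Nonempty A]
    (P : X → A → X → ℝ)
    (hP0 : ∀ x a y, 0 ≤ P x a y) (hP1 : ∀ x a, ∑ y : X, P x a y = 1)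
    (π μ : X → A → ℝ)
    (hπ0 : ∀ x a, 0 ≤ π x a) (hπ1 : ∀ x, ∑ a : A, π x a = 1)
    (hμ0 : ∀ x a, 0 ≤ μ x a) (hμ1 : ∀ x, ∑ a : A, μ x a = 1)
    (ε : ℝ) (hε : ∀ x, ∑ a : A, |π x a - μ x a| ≤ ε)
    (γ : ℝ) (hγ0 : 0 < γ) (hγ1 : γ < 1)
    (lam : ℝ) (hl0 : 0 ≤ lam) (hl1 : lam ≤ 1)
    (hη : γ * (1 - lam + lam * ε) / (1 - lam * γ) < 1)
    (r : X × A → ℝ) (Qπ : X × A → ℝ)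
    (hQπ : Qπ = r + γ • Pop P π Qπ) :
    ∀ Q : X × A → ℝ, Rpi P π μ γ lam r Q = Q → Q = Qπ :=
  stmt9_general P hP0 hP1 π μ hπ0 hπ1 hμ0 hμ1 γ hγ0 hγ1 lam hl0 hl1 r Qπ hQπ
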